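/- arXiv:0804.4258 — 5 statements merged into one kernel-verified Lean document; each statement's English description precedes it below -/
import Mathlib

section
/- If 0 < q < 1, p > 0, r ≥ 0, p + q + r = 1 and r ≤ pq, then for all real z, (p + r e^{iz})/(1 - q e^{iz}) = exp( Σ_{k=1}^∞ (e^{ikz} - 1) · (q^k/k) · (1 - (-r/(pq))^k) ), and all the coefficients (q^k/k)(1 - (-r/(pq))^k) are nonnegative. -/
open Complex

/-!
Write `w = e^{iz}`. For `‖x‖ < 1` the series `∑ xᵏ/k` sums to `-log (1 - x)`, so with `a = q`
and `b = -r/p` (both of norm `< 1`) the series `∑ (wᵏ - 1)(aᵏ - bᵏ)/k` is a signed sum of four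
logarithms, and its exponential is `(1 - bw)(1 - a) / ((1 - aw)(1 - b))`. Since `1 - b = (p + r)/p`
and `1 - a = p + r`, this is `(p + rw)/(1 - qw)`. The coefficient `(qᵏ - bᵏ)/k` equals
`(qᵏ/k)(1 - (-r/(pq))ᵏ)`, which is nonnegative because `0 ≤ r/(pq) ≤ 1`.
-/

lemma one_sub_ne_zero_of_norm_lt_one {R : Type*} [SeminormedRing R] [NormOneClass R] {x : R}
    (hx : ‖x‖ < 1) : 1 - x ≠ 0 := by
  intro h
  rw [← sub_eq_zero.mp h, norm_one] at hx
  exact hx.false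

lemma norm_mul_lt_one {R : Type*} [SeminormedRing R] {a w : R} (ha : ‖a‖ < 1) (hw : ‖w‖ ≤ 1) :
    ‖a * w‖ < 1 :=
  (norm_mul_le a w).trans_lt ((mul_le_of_le_one_right (norm_nonneg a) hw).trans_lt ha)

lemma hasSum_pow_sub_one_mul_pow_sub_pow_div {a b w : ℂ} (ha : ‖a‖ < 1) (hb : ‖b‖ < 1)
    (hw : ‖w‖ ≤ 1) :
    HasSum (fun k : ℕ ↦ (w ^ k - 1) * ((a ^ k - b ^ k) / k))
      (log (1 - b * w) + log (1 - a) - (log (1 - a * w) + log (1 - b))) := by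
  have h := ((hasSum_taylorSeries_neg_log (norm_mul_lt_one ha hw)).sub
    (hasSum_taylorSeries_neg_log (norm_mul_lt_one hb hw))).sub
    ((hasSum_taylorSeries_neg_log ha).sub (hasSum_taylorSeries_neg_log hb))
  rw [show log (1 - b * w) + log (1 - a) - (log (1 - a * w) + log (1 - b)) =
    -log (1 - a * w) - -log (1 - b * w) - (-log (1 - a) - -log (1 - b)) by ring]
  exact h.congr_fun fun k ↦ by ring

lemma exp_tsum_pow_sub_one_mul_pow_sub_pow_div {a b w : ℂ} (ha : ‖a‖ < 1) (hb : ‖b‖ < 1)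
    (hw : ‖w‖ ≤ 1) :
    exp (∑' k : ℕ, (w ^ k - 1) * ((a ^ k - b ^ k) / k)) =
      (1 - b * w) * (1 - a) / ((1 - a * w) * (1 - b)) := by
  rw [(hasSum_pow_sub_one_mul_pow_sub_pow_div ha hb hw).tsum_eq, exp_sub, exp_add, exp_add,
    exp_log (one_sub_ne_zero_of_norm_lt_one (norm_mul_lt_one hb hw)),
    exp_log (one_sub_ne_zero_of_norm_lt_one ha),
    exp_log (one_sub_ne_zero_of_norm_lt_one (norm_mul_lt_one ha hw)),
    exp_log (one_sub_ne_zero_of_norm_lt_one hb)]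

lemma one_sub_neg_pow_nonneg {t : ℝ} (ht₀ : 0 ≤ t) (ht₁ : t ≤ 1) (k : ℕ) :
    0 ≤ 1 - (-t) ^ k := by
  have : |(-t) ^ k| ≤ 1 := by
    rw [abs_pow, abs_neg, abs_of_nonneg ht₀]
    exact pow_le_one₀ ht₀ ht₁
  linarith [le_abs_self ((-t) ^ k)]

lemma pow_div_mul_one_sub_neg_div_pow {p q r : ℝ} (hq : q ≠ 0) (k : ℕ) :
    q ^ k / k * (1 - (-(r / (p * q))) ^ k) = (q ^ k - (-(r / p)) ^ k) / k := by
  rw [show -(r / p) = -(r / (p * q)) * q by field_simp, mul_pow]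
  ring

lemma add_mul_div_one_sub_mul_eq {p q r w : ℂ} (hp : p ≠ 0) (hsum : p + q + r = 1)
    (hqw : 1 - q * w ≠ 0) (hpr : 1 - -(r / p) ≠ 0) :
    (p + r * w) / (1 - q * w) = (1 - -(r / p) * w) * (1 - q) / ((1 - q * w) * (1 - -(r / p))) := by
  rw [div_eq_div_iff hqw (mul_ne_zero hqw hpr)]
  field_simp
  linear_combination (p + r * w) * (1 - q * w) * hsum

theorem rho_levy_khintchine_general (p q r : ℝ) (hq : 0 < q) (hp : 0 < p)
    (hr : 0 ≤ r) (hsum : p + q + r = 1) (hrpq : r ≤ p * q) :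
    (∀ k : ℕ, 1 ≤ k → 0 ≤ q ^ k / (k : ℝ) * (1 - (-(r / (p * q))) ^ k)) ∧
    ∀ z : ℝ,
      ((p : ℂ) + r * Complex.exp (Complex.I * z)) / (1 - q * Complex.exp (Complex.I * z)) =
      Complex.exp (∑' k : ℕ, (Complex.exp (Complex.I * (k : ℂ) * z) - 1) *
        ((q ^ k / (k : ℝ) * (1 - (-(r / (p * q))) ^ k) : ℝ) : ℂ)) := by
  have hpq : 0 < p * q := mul_pos hp hq
  refine ⟨fun k _ ↦ mul_nonneg (by positivity)
    (one_sub_neg_pow_nonneg (div_nonneg hr hpq.le) ((div_le_one hpq).mpr hrpq) k), fun z ↦ ?_⟩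
  have hq₁ : ‖(q : ℂ)‖ < 1 := by
    rw [norm_real, Real.norm_of_nonneg hq.le]
    linarith
  have hrp : ‖(-(r / p) : ℂ)‖ < 1 := by
    rw [norm_neg, ← ofReal_div, norm_real, Real.norm_of_nonneg (div_nonneg hr hp.le),
      div_lt_one hp]
    nlinarith
  have hw : ‖exp (I * z)‖ ≤ 1 := (norm_exp_I_mul_ofReal z).le
  have hexp (k : ℕ) : exp (I * k * z) = exp (I * z) ^ k := by
    rw [← exp_nat_mul]
    ring_nf
  simp only [pow_div_mul_one_sub_neg_div_pow hq.ne', hexp]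
  push_cast
  rw [exp_tsum_pow_sub_one_mul_pow_sub_pow_div hq₁ hrp hw]
  exact add_mul_div_one_sub_mul_eq (by exact_mod_cast hp.ne') (by exact_mod_cast hsum)
    (one_sub_ne_zero_of_norm_lt_one (norm_mul_lt_one hq₁ hw)) (one_sub_ne_zero_of_norm_lt_one hrp)

/-- If `r ≤ pq` then `(p + r e^{iz})/(1 - q e^{iz})` admits the Lévy–Khintchine type
representation `exp(∑_{k≥1} (e^{ikz} - 1) (q^k/k)(1 - (-r/(pq))^k))`, with all
coefficients nonnegative. -/
theorem rho_levy_khintchine (p q r : ℝ) (hq : 0 < q) (hq1 : q < 1) (hp : 0 < p)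
    (hr : 0 ≤ r) (hsum : p + q + r = 1) (hrpq : r ≤ p * q) :
    (∀ k : ℕ, 1 ≤ k → 0 ≤ q ^ k / (k : ℝ) * (1 - (-(r / (p * q))) ^ k)) ∧
    ∀ z : ℝ,
      ((p : ℂ) + r * Complex.exp (Complex.I * z)) / (1 - q * Complex.exp (Complex.I * z)) =
      Complex.exp (∑' k : ℕ, (Complex.exp (Complex.I * (k : ℂ) * z) - 1) *
        ((q ^ k / (k : ℝ) * (1 - (-(r / (p * q))) ^ k) : ℝ) : ℂ)) :=
  rho_levy_khintchine_general p q r hq hp hr hsum hrpq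
end

section
/- Let p, q, r ≥ 0 with p + q + r = 1, 0 < q < 1, p > 0 and r > pq. Define p_0 = p, p_k = q^{k-1} r + q^k p for k ≥ 1, and define q_1, q_2 by the Katti recursion n p_n = Σ_{k=1}^n k q_k p_{n-k} (n = 1, 2). Then q_2 = (1 + r/q)(1-q) q^2 [1 - q - (r/q)(1+q)] / (2 p^2) < 0; consequently ρ_{q,r} = Σ_k p_k δ_k is not infinitely divisible. -/
open MeasureTheory Complex

noncomputable def rhoMeasure (p q r : ℝ) : Measure ℝ :=
  Measure.sum (fun k : ℕ =>
    ENNReal.ofReal (if k = 0 then p else q ^ (k - 1) * r + q ^ k * p) • Measure.dirac (k : ℝ))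

noncomputable def convPow (μ : Measure ℝ) : ℕ → Measure ℝ
  | 0 => Measure.dirac 0
  | n + 1 => (convPow μ n).conv μ

/-- A probability measure is infinitely divisible if for every `n ≥ 1` it is the
`n`-fold convolution of some probability measure. -/
def InfinitelyDivisible (μ : Measure ℝ) : Prop :=
  ∀ n : ℕ, 0 < n → ∃ ν : Measure ℝ, IsProbabilityMeasure ν ∧ μ = convPow ν n

noncomputable def charFun (μ : Measure ℝ) (z : ℝ) : ℂ :=
  ∫ x, Complex.exp (Complex.I * z * x) ∂μ

/-! If `ρ = ν^{∗n}`, then `ν` lives on `ℕ`: `ν` has no mass below `0` because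
`ν(Iio 0)ⁿ ≤ ρ(Iio 0) = 0`, hence `ρ{0} = ν{0}ⁿ > 0`, and then `ν{0}ⁿ⁻¹ ν(A) ≤ ρ(A)`.
With `a = ν{0}`, `b = ν{1}` this gives `ρ{0} = aⁿ`, `ρ{1} = n aⁿ⁻¹ b` and
`ρ{2} ≥ C(n,2) aⁿ⁻² b²`, so `(n - 1) ρ{1}² ≤ 2n ρ{0} ρ{2}`; in Katti's terms
`q₂ ≥ -q₁² / (2n)`. For all `n` this forces `q₂ ≥ 0`, whereas here
`ρ{1}² - 2 ρ{0} ρ{2} = (r + qp)(r - pq) > 0`. -/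

open Set
open scoped ENNReal Pointwise

section Convolution

variable {μ ν : Measure ℝ} [SFinite ν]

lemma mul_le_conv_of_add_subset {s t u : Set ℝ} (hst : s + t ⊆ u) : μ s * ν t ≤ (μ ∗ ν) u :=
  calc μ s * ν t = μ.prod ν (s ×ˢ t) := (Measure.prod_prod s t).symm
    _ ≤ μ.prod ν ((fun z : ℝ × ℝ ↦ z.1 + z.2) ⁻¹' u) :=
        measure_mono fun _ hz ↦ hst (add_mem_add hz.1 hz.2)
    _ ≤ (μ ∗ ν) u := Measure.le_map_apply (by fun_prop) u

lemma conv_apply_eq_prod_inter {s t u : Set ℝ} (hu : MeasurableSet u) (hμ : μ sᶜ = 0)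
    (hν : ν tᶜ = 0) :
    (μ ∗ ν) u = μ.prod ν ((fun z : ℝ × ℝ ↦ z.1 + z.2) ⁻¹' u ∩ s ×ˢ t) := by
  rw [Measure.conv, Measure.map_apply (by fun_prop) hu, measure_inter_conull]
  rw [compl_prod_eq_union]
  exact measure_union_null (by simp [Measure.prod_prod, hμ]) (by simp [Measure.prod_prod, hν])

lemma conv_compl_eq_zero {s t u : Set ℝ} (hu : MeasurableSet u) (hst : s + t ⊆ u)
    (hμ : μ sᶜ = 0) (hν : ν tᶜ = 0) : (μ ∗ ν) uᶜ = 0 := by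
  rw [conv_apply_eq_prod_inter hu.compl hμ hν]
  convert measure_empty (μ := μ.prod ν)
  exact eq_empty_of_forall_notMem fun z ⟨hz, hzs, hzt⟩ ↦ hz (hst (add_mem_add hzs hzt))

lemma conv_singleton_zero (hμ : μ (Ici 0)ᶜ = 0) (hν : ν (Ici 0)ᶜ = 0) :
    (μ ∗ ν) {0} = μ {0} * ν {0} := by
  rw [conv_apply_eq_prod_inter (measurableSet_singleton 0) hμ hν, ← Measure.prod_prod,
    singleton_prod_singleton]
  congr 1
  ext ⟨x, y⟩
  simp only [mem_inter_iff, mem_preimage, mem_singleton_iff, mem_prod, mem_Ici, Prod.mk.injEq]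
  constructor
  · rintro ⟨hxy, hx, hy⟩
    constructor <;> linarith
  · rintro ⟨rfl, rfl⟩
    norm_num

lemma conv_singleton_one (hμ : μ (range ((↑) : ℕ → ℝ))ᶜ = 0)
    (hν : ν (range ((↑) : ℕ → ℝ))ᶜ = 0) :
    (μ ∗ ν) {1} = μ {0} * ν {1} + μ {1} * ν {0} := by
  have hpairs : (fun z : ℝ × ℝ ↦ z.1 + z.2) ⁻¹' {1} ∩
      range ((↑) : ℕ → ℝ) ×ˢ range ((↑) : ℕ → ℝ) = {((0 : ℝ), (1 : ℝ))} ∪ {(1, 0)} := by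
    ext ⟨x, y⟩
    simp only [mem_inter_iff, mem_preimage, mem_singleton_iff, mem_prod, mem_union,
      Prod.mk.injEq]
    constructor
    · rintro ⟨hxy, ⟨m, rfl⟩, ⟨n, rfl⟩⟩
      have : m + n = 1 := by exact_mod_cast hxy
      rcases Nat.add_eq_one_iff.mp this with ⟨rfl, rfl⟩ | ⟨rfl, rfl⟩ <;> simp
    · rintro (⟨rfl, rfl⟩ | ⟨rfl, rfl⟩)
      exacts [⟨by norm_num, ⟨0, Nat.cast_zero⟩, ⟨1, Nat.cast_one⟩⟩,
        ⟨by norm_num, ⟨1, Nat.cast_one⟩, ⟨0, Nat.cast_zero⟩⟩]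
  rw [conv_apply_eq_prod_inter (measurableSet_singleton 1) hμ hν, hpairs,
    measure_union (by simp) (measurableSet_singleton _), ← singleton_prod_singleton,
    ← singleton_prod_singleton, Measure.prod_prod, Measure.prod_prod]

lemma add_le_conv_singleton_two : μ {1} * ν {1} + μ {2} * ν {0} ≤ (μ ∗ ν) {2} := by
  rw [← Measure.prod_prod, ← Measure.prod_prod, singleton_prod_singleton,
    singleton_prod_singleton, ← measure_union (by simp) (measurableSet_singleton _)]
  calc μ.prod ν ({((1 : ℝ), (1 : ℝ))} ∪ {(2, 0)})
      ≤ μ.prod ν ((fun z : ℝ × ℝ ↦ z.1 + z.2) ⁻¹' {2}) :=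
        measure_mono (by rintro _ (rfl | rfl) <;> norm_num)
    _ ≤ (μ ∗ ν) {2} := Measure.le_map_apply (by fun_prop) _

end Convolution

section ConvPow

variable {ν : Measure ℝ}

lemma convPow_zero (ν : Measure ℝ) : convPow ν 0 = Measure.dirac 0 := rfl

lemma convPow_succ (ν : Measure ℝ) (n : ℕ) : convPow ν (n + 1) = convPow ν n ∗ ν := rfl

instance sFinite_convPow [SFinite ν] (n : ℕ) : SFinite (convPow ν n) := by
  induction n with
  | zero => rw [convPow_zero]; infer_instance
  | succ n ih => rw [convPow_succ]; infer_instance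

instance isFiniteMeasure_convPow [IsFiniteMeasure ν] (n : ℕ) :
    IsFiniteMeasure (convPow ν n) := by
  induction n with
  | zero => rw [convPow_zero]; infer_instance
  | succ n ih => rw [convPow_succ]; infer_instance

lemma convPow_one (ν : Measure ℝ) [SFinite ν] : convPow ν 1 = ν := by
  rw [convPow_succ, convPow_zero, Measure.dirac_zero_conv]

lemma pow_succ_le_convPow_succ [SFinite ν] {s : Set ℝ} (hs : s + s ⊆ s) (n : ℕ) :
    ν s ^ (n + 1) ≤ convPow ν (n + 1) s := by
  induction n with
  | zero => rw [zero_add, pow_one, convPow_one]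
  | succ n ih =>
    rw [pow_succ, convPow_succ]
    exact (mul_le_mul_left ih _).trans (mul_le_conv_of_add_subset hs)

lemma convPow_compl_eq_zero [SFinite ν] {s : Set ℝ} (hs : MeasurableSet s) (h0 : 0 ∈ s)
    (hss : s + s ⊆ s) (hν : ν sᶜ = 0) (n : ℕ) : convPow ν n sᶜ = 0 := by
  induction n with
  | zero => simp [convPow_zero, Measure.dirac_apply' _ hs.compl, h0]
  | succ n ih => exact conv_compl_eq_zero hs hss ih hν

lemma Ici_zero_add_Ici_zero_subset : Ici (0 : ℝ) + Ici 0 ⊆ Ici 0 := by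
  simpa using Set.Ici_add_Ici_subset (0 : ℝ) 0

lemma range_natCast_subset_Ici : range ((↑) : ℕ → ℝ) ⊆ Ici 0 :=
  range_subset_iff.mpr fun k ↦ mem_Ici.mpr k.cast_nonneg

lemma range_natCast_add_subset :
    range ((↑) : ℕ → ℝ) + range ((↑) : ℕ → ℝ) ⊆ range ((↑) : ℕ → ℝ) := by
  rintro _ ⟨_, ⟨m, rfl⟩, _, ⟨n, rfl⟩, rfl⟩
  exact ⟨m + n, Nat.cast_add m n⟩

lemma convPow_singleton_zero [SFinite ν] (hν : ν (Ici 0)ᶜ = 0) (n : ℕ) :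
    convPow ν n {0} = ν {0} ^ n := by
  induction n with
  | zero => simp [convPow_zero]
  | succ n ih =>
    rw [convPow_succ, conv_singleton_zero (convPow_compl_eq_zero measurableSet_Ici
      self_mem_Ici Ici_zero_add_Ici_zero_subset hν n) hν, ih, pow_succ]

lemma measure_compl_Ici_zero_eq_zero (hν : ν (range ((↑) : ℕ → ℝ))ᶜ = 0) : ν (Ici 0)ᶜ = 0 :=
  measure_mono_null (compl_subset_compl.mpr range_natCast_subset_Ici) hν

variable [SFinite ν] (hν : ν (range ((↑) : ℕ → ℝ))ᶜ = 0)
include hν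

lemma convPow_range_natCast_compl_eq_zero (n : ℕ) : convPow ν n (range ((↑) : ℕ → ℝ))ᶜ = 0 :=
  convPow_compl_eq_zero (countable_range _).measurableSet ⟨0, Nat.cast_zero⟩
    range_natCast_add_subset hν n

lemma convPow_singleton_one (n : ℕ) : convPow ν n {1} = n * ν {0} ^ (n - 1) * ν {1} := by
  induction n with
  | zero => simp [convPow_zero]
  | succ n ih =>
    rw [convPow_succ, conv_singleton_one (convPow_range_natCast_compl_eq_zero hν n) hν,
      convPow_singleton_zero (measure_compl_Ici_zero_eq_zero hν), ih]
    rcases n with _ | n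
    · simp
    · push_cast
      ring

lemma choose_two_mul_le_convPow_singleton_two (n : ℕ) :
    n.choose 2 * ν {0} ^ (n - 2) * ν {1} ^ 2 ≤ convPow ν n {2} := by
  induction n with
  | zero => simp
  | succ n ih =>
    calc ((n + 1).choose 2 : ℝ≥0∞) * ν {0} ^ (n + 1 - 2) * ν {1} ^ 2
        = convPow ν n {1} * ν {1} + n.choose 2 * ν {0} ^ (n - 2) * ν {1} ^ 2 * ν {0} := by
          rw [convPow_singleton_one hν]
          rcases n with _ | _ | n
          · simp
          · simp [sq]
          · simp only [Nat.choose_succ_succ' _ 1, Nat.choose_one_right]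
            push_cast
            ring
      _ ≤ convPow ν n {1} * ν {1} + convPow ν n {2} * ν {0} := by gcongr
      _ ≤ convPow ν (n + 1) {2} := convPow_succ ν n ▸ add_le_conv_singleton_two

lemma sub_one_mul_convPow_real_one_sq_le [IsFiniteMeasure ν] (n : ℕ) :
    ((n : ℝ) - 1) * (convPow ν n).real {1} ^ 2 ≤
      2 * n * (convPow ν n).real {0} * (convPow ν n).real {2} := by
  have h₂ := ENNReal.toReal_mono (measure_ne_top _ _)
    (choose_two_mul_le_convPow_singleton_two hν n)
  simp only [measureReal_def, convPow_singleton_zero (measure_compl_Ici_zero_eq_zero hν),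
    convPow_singleton_one hν, ENNReal.toReal_mul, ENNReal.toReal_pow,
    ENNReal.toReal_natCast] at h₂ ⊢
  set a := (ν {0}).toReal
  set b := (ν {1}).toReal
  rcases n with _ | _ | n
  · simp
  · simpa using by positivity
  · rw [Nat.cast_choose_two] at h₂
    calc ((↑(n + 2) : ℝ) - 1) * (↑(n + 2) * a ^ (n + 2 - 1) * b) ^ 2
        = 2 * ↑(n + 2) * a ^ (n + 2) *
            (↑(n + 2) * (↑(n + 2) - 1) / 2 * a ^ (n + 2 - 2) * b ^ 2) := by
          simp only [Nat.add_sub_cancel, show n + 2 - 1 = n + 1 by omega]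
          push_cast
          ring
      _ ≤ _ := by gcongr

end ConvPow

lemma measure_compl_range_natCast_eq_zero_of_convPow {ν : Measure ℝ} [SFinite ν] {n : ℕ}
    (hn : 0 < n) (hρ : convPow ν n (range ((↑) : ℕ → ℝ))ᶜ = 0) (h₀ : convPow ν n {0} ≠ 0) :
    ν (range ((↑) : ℕ → ℝ))ᶜ = 0 := by
  obtain ⟨m, rfl⟩ := Nat.exists_eq_add_one_of_ne_zero hn.ne'
  have hν₀ : ν (Ici 0)ᶜ = 0 := by
    have hneg : (Ici (0 : ℝ))ᶜ + (Ici 0)ᶜ ⊆ (Ici 0)ᶜ := by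
      rw [compl_Ici]
      rintro _ ⟨x, hx, y, hy, rfl⟩
      exact mem_Iio.mpr (add_neg hx hy)
    have := pow_succ_le_convPow_succ (ν := ν) hneg m
    rwa [measure_mono_null (compl_subset_compl.mpr range_natCast_subset_Ici) hρ,
      nonpos_iff_eq_zero, pow_eq_zero_iff m.succ_ne_zero] at this
  have ha : ν {0} ^ m ≠ 0 := by
    rw [convPow_singleton_zero hν₀] at h₀
    exact pow_ne_zero m (ne_zero_pow m.succ_ne_zero h₀)
  have := mul_le_conv_of_add_subset (μ := convPow ν m) (ν := ν) (s := {0})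
    (t := (range ((↑) : ℕ → ℝ))ᶜ) (u := (range ((↑) : ℕ → ℝ))ᶜ) (by simp)
  rwa [← convPow_succ, hρ, convPow_singleton_zero hν₀, nonpos_iff_eq_zero, mul_eq_zero,
    or_iff_right ha] at this

lemma rhoMeasure_singleton_natCast (p q r : ℝ) (k : ℕ) :
    rhoMeasure p q r {(k : ℝ)} =
      ENNReal.ofReal (if k = 0 then p else q ^ (k - 1) * r + q ^ k * p) := by
  rw [rhoMeasure, Measure.sum_apply _ (measurableSet_singleton _), tsum_eq_single k]
  · simp
  · intro j hj
    simp [Measure.dirac_apply', hj]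

lemma rhoMeasure_compl_range_natCast (p q r : ℝ) :
    rhoMeasure p q r (range ((↑) : ℕ → ℝ))ᶜ = 0 := by
  rw [rhoMeasure, Measure.sum_apply _ (countable_range _).measurableSet.compl]
  simp [Measure.dirac_apply' _ (countable_range _).measurableSet.compl]

lemma sub_one_mul_sq_le_of_rhoMeasure_eq_convPow {p q r : ℝ} (hp : 0 < p) (hq : 0 ≤ q)
    (hr : 0 ≤ r) {ν : Measure ℝ} [IsFiniteMeasure ν] {n : ℕ} (hn : 0 < n)
    (hρ : rhoMeasure p q r = convPow ν n) :
    ((n : ℝ) - 1) * (r + q * p) ^ 2 ≤ 2 * n * p * (q * r + q ^ 2 * p) := by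
  have h₀ : rhoMeasure p q r {0} = ENNReal.ofReal p := by
    simpa using rhoMeasure_singleton_natCast p q r 0
  have h₁ : rhoMeasure p q r {1} = ENNReal.ofReal (r + q * p) := by
    simpa using rhoMeasure_singleton_natCast p q r 1
  have h₂ : rhoMeasure p q r {2} = ENNReal.ofReal (q * r + q ^ 2 * p) := by
    simpa using rhoMeasure_singleton_natCast p q r 2
  have hνℕ := measure_compl_range_natCast_eq_zero_of_convPow hn
    (hρ ▸ rhoMeasure_compl_range_natCast p q r) (hρ ▸ h₀ ▸ (ENNReal.ofReal_pos.mpr hp).ne')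
  have := sub_one_mul_convPow_real_one_sq_le hνℕ n
  rwa [← hρ, measureReal_def, measureReal_def, measureReal_def, h₀, h₁, h₂,
    ENNReal.toReal_ofReal hp.le, ENNReal.toReal_ofReal (by positivity),
    ENNReal.toReal_ofReal (by positivity)] at this

theorem rho_not_infinitely_divisible_general (p q r : ℝ) (hq : 0 < q) (hp : 0 < p)
    (hsum : p + q + r = 1) (hrpq : p * q < r) :
    (2 * (q * r + q ^ 2 * p) - (r + q * p) / p * (r + q * p)) / (2 * p) =
      (1 + r / q) * (1 - q) * q ^ 2 * (1 - q - r / q * (1 + q)) / (2 * p ^ 2) ∧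
    (2 * (q * r + q ^ 2 * p) - (r + q * p) / p * (r + q * p)) / (2 * p) < 0 ∧
    ¬ InfinitelyDivisible (rhoMeasure p q r) := by
  have hr : 0 < r := (mul_pos hp hq).trans hrpq
  have hd : 0 < (r + q * p) * (r - p * q) := mul_pos (by positivity) (by linarith)
  refine ⟨?_, ?_, ?_⟩
  · obtain rfl : r = 1 - p - q := by linarith
    field_simp
    ring
  · have hq₂ : 2 * (q * r + q ^ 2 * p) - (r + q * p) / p * (r + q * p) =
        -((r + q * p) * (r - p * q)) / p := by
      field_simp
      ring
    rw [hq₂]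
    exact div_neg_of_neg_of_pos (div_neg_of_neg_of_pos (neg_neg_of_pos hd) hp) (by positivity)
  intro hID
  obtain ⟨n, hn⟩ := exists_nat_gt ((r + q * p) ^ 2 / ((r + q * p) * (r - p * q)))
  have hn₀ : 0 < n := Nat.cast_pos.mp ((div_pos (by positivity) hd).trans hn)
  obtain ⟨ν, hν, hρ⟩ := hID n hn₀
  have := sub_one_mul_sq_le_of_rhoMeasure_eq_convPow hp hq.le hr.le hn₀ hρ
  rw [div_lt_iff₀ hd] at hn
  nlinarith

/-- Katti recursion for `ρ_{q,r}` when `r > pq`: with `p₀ = p`, `p₁ = r + qp`,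
`p₂ = qr + q²p`, `q₁ = p₁/p₀` and `q₂ = (2p₂ - q₁p₁)/(2p₀)`, one has
`q₂ = (1 + r/q)(1-q)q²[1 - q - (r/q)(1+q)]/(2p²) < 0`, and consequently
`ρ_{q,r}` is not infinitely divisible. -/
theorem rho_not_infinitely_divisible (p q r : ℝ) (hq : 0 < q) (hq1 : q < 1) (hp : 0 < p)
    (hr : 0 ≤ r) (hsum : p + q + r = 1) (hrpq : p * q < r) :
    (2 * (q * r + q ^ 2 * p) - (r + q * p) / p * (r + q * p)) / (2 * p) =
      (1 + r / q) * (1 - q) * q ^ 2 * (1 - q - r / q * (1 + q)) / (2 * p ^ 2) ∧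
    (2 * (q * r + q ^ 2 * p) - (r + q * p) / p * (r + q * p)) / (2 * p) < 0 ∧
    ¬ InfinitelyDivisible (rhoMeasure p q r) :=
  rho_not_infinitely_divisible_general p q r hq hp hsum hrpq
end

section
/- Let 0 < q < 1, r ≥ 0, p = 1 − q − r ≥ 0. Then the entropy of ρ_{q,r} equals H(ρ_{q,r}) = (q + r)( log(1/(1−q)) + (1/(1−q)) log(1/q) − log((q+r)/q) ) + p log(1/p), where p log(1/p) is interpreted as 0 when p = 0. -/
/-!
Since `p = 1 - q - r`, the masses `ρ {k + 1} = (q + r)(1 - q) q ^ k` form a geometric sequence,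
so apart from the atom at `0` the entropy series is a combination of `∑ q ^ k` and `∑ k q ^ k`.
-/

open Real

lemma mul_pow_mul_log_mul_pow (c q : ℝ) (k : ℕ) :
    c * q ^ k * log (c * q ^ k) = c * log c * q ^ k + c * log q * (k * q ^ k) := by
  rcases eq_or_ne c 0 with rfl | hc
  · simp
  rcases eq_or_ne q 0 with rfl | hq
  · cases k <;> simp
  rw [log_mul hc (pow_ne_zero k hq), log_pow]
  ring

lemma hasSum_mul_pow_mul_log_mul_pow {q : ℝ} (hq : |q| < 1) (c : ℝ) :
    HasSum (fun k : ℕ => c * q ^ k * log (c * q ^ k))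
      (c * log c * (1 - q)⁻¹ + c * log q * (q / (1 - q) ^ 2)) := by
  have hgeom := (hasSum_geometric_of_abs_lt_one hq).mul_left (c * log c)
  have harith := (hasSum_coe_mul_geometric_of_norm_lt_one (𝕜 := ℝ) (r := q)
    (by rwa [norm_eq_abs])).mul_left (c * log q)
  simpa only [← mul_pow_mul_log_mul_pow] using hgeom.add harith

theorem entropy_rho_general (q r p : ℝ) (hq : 0 < q) (hq1 : q < 1) (hr : 0 ≤ r)
    (hp : p = 1 - q - r) :
    -∑' k : ℕ, (if k = 0 then p else q ^ (k - 1) * r + q ^ k * p) *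
        Real.log (if k = 0 then p else q ^ (k - 1) * r + q ^ k * p) =
      (q + r) * (Real.log (1 / (1 - q)) + 1 / (1 - q) * Real.log (1 / q) -
        Real.log ((q + r) / q)) + p * Real.log (1 / p) := by
  set ρ : ℕ → ℝ := fun k => if k = 0 then p else q ^ (k - 1) * r + q ^ k * p
  have hρ_succ (k : ℕ) : ρ (k + 1) = (q + r) * (1 - q) * q ^ k := by
    simp only [ρ, Nat.add_one_ne_zero, if_false, Nat.add_sub_cancel, hp]
    ring
  have htail := hasSum_mul_pow_mul_log_mul_pow (abs_lt.2 ⟨by linarith, hq1⟩) ((q + r) * (1 - q))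
  simp only [← hρ_succ] at htail
  rw [(HasSum.zero_add (f := fun k => ρ k * log (ρ k)) htail).tsum_eq]
  have hqr : 0 < q + r := by linarith
  have h1q : 1 - q ≠ 0 := (sub_pos.2 hq1).ne'
  simp only [ρ, if_pos, one_div, log_inv, log_mul hqr.ne' h1q, log_div hqr.ne' hq.ne']
  field_simp
  ring

/-- The entropy of `ρ_{q,r}` equals
`(q+r)(log(1/(1-q)) + (1/(1-q)) log(1/q) - log((q+r)/q)) + p log(1/p)`,
where `p log(1/p)` is interpreted as `0` when `p = 0`. -/
theorem entropy_rho (q r p : ℝ) (hq : 0 < q) (hq1 : q < 1) (hr : 0 ≤ r)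
    (hp : p = 1 - q - r) (hp0 : 0 ≤ p) :
    -∑' k : ℕ, (if k = 0 then p else q ^ (k - 1) * r + q ^ k * p) *
        Real.log (if k = 0 then p else q ^ (k - 1) * r + q ^ k * p) =
      (q + r) * (Real.log (1 / (1 - q)) + 1 / (1 - q) * Real.log (1 / q) -
        Real.log ((q + r) / q)) + p * Real.log (1 / p) :=
  entropy_rho_general q r p hq hq1 hr hp
end

section
/- Let 0 < q < 1, p = 1 − q, and 0 < t ≤ 1. The entropy of the negative binomial distribution ρ^{t*} with parameters t and p satisfies H(ρ^{t*}) ≤ t [ (1/p)(1 + 2 log(1/p)) + (q/p) log(1/t) ]. -/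
/-!
The atom at `0` contributes `-p^t log p^t ≤ t log(1/p)`. For `k ≥ 1` the rising factorial
`t(t+1)⋯(t+k-1)` lies between `t (k-1)!` and `t k!`, so `t p^t q^k / k ≤ ρ({k}) ≤ t q^k`, whence
`-ρ({k}) log ρ({k}) ≤ t q^k (log(1/t) + t log(1/p) + k log(1/q) + log k)`. Bounding
`log k ≤ p k - 1 + log(1/p)` makes this majorant `q^k` times an affine function of `k`, whose sum
is explicit; `q log(1/q) ≤ p` then closes the estimate.
-/
open Real Finset
open scoped Nat

lemma prod_range_succ_add_eq (t : ℝ) (k : ℕ) :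
    ∏ j ∈ range (k + 1), (t + j) = t * ∏ j ∈ range k, (t + 1 + j) := by
  rw [prod_range_succ', mul_comm]
  push_cast
  simp only [add_zero, add_assoc, add_comm (1:ℝ)]

lemma mul_factorial_le_prod_range_succ_add {t : ℝ} (ht : 0 ≤ t) (k : ℕ) :
    t * k ! ≤ ∏ j ∈ range (k + 1), (t + j) := by
  rw [prod_range_succ_add_eq, ← prod_range_add_one_eq_factorial]
  push_cast
  exact mul_le_mul_of_nonneg_left
    (prod_le_prod (fun j _ => by positivity) fun j _ => by linarith) ht

lemma prod_range_succ_add_le_mul_factorial {t : ℝ} (ht : 0 ≤ t) (ht1 : t ≤ 1) (k : ℕ) :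
    ∏ j ∈ range (k + 1), (t + j) ≤ t * (k + 1)! := by
  rw [prod_range_succ_add_eq, ← prod_range_add_one_eq_factorial, prod_range_succ']
  push_cast
  rw [mul_one]
  exact mul_le_mul_of_nonneg_left
    (prod_le_prod (fun j _ => by positivity) fun j _ => by linarith) ht

lemma Real.log_le_mul_sub_one_sub_log {p x : ℝ} (hp : 0 < p) (hx : 0 < x) :
    log x ≤ p * x - 1 - log p := by
  have := log_le_sub_one_of_pos (mul_pos hp hx)
  rw [log_mul hp.ne' hx.ne'] at this
  linarith

lemma Real.negMulLog_le_mul_of_le {x y b : ℝ} (hx : 0 ≤ x) (hxy : x ≤ y) (hx1 : x ≤ 1)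
    (hb : -log x ≤ b) : negMulLog x ≤ y * b := by
  rw [negMulLog, neg_mul_comm]
  exact mul_le_mul hxy hb (neg_nonneg.2 (log_nonpos hx hx1)) (hx.trans hxy)

lemma hasSum_pow_succ_mul_affine {q : ℝ} (hq : 0 ≤ q) (hq1 : q < 1) (a b : ℝ) :
    HasSum (fun k : ℕ => q ^ (k + 1) * (a + b * (k + 1)))
      (a * (q / (1 - q)) + b * (q / (1 - q) ^ 2)) := by
  have hgeo : HasSum (fun k : ℕ => q ^ (k + 1)) (q / (1 - q)) := by
    have := (hasSum_geometric_of_lt_one hq hq1).mul_left q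
    rw [← div_eq_mul_inv] at this
    exact this.congr_fun fun k => pow_succ' q k
  have harith : HasSum (fun k : ℕ => ((k + 1 : ℕ) : ℝ) * q ^ (k + 1)) (q / (1 - q) ^ 2) := by
    have hnorm : ‖q‖ < 1 := by rwa [norm_of_nonneg hq]
    simpa using (hasSum_nat_add_iff' (f := fun n : ℕ => (n : ℝ) * q ^ n) 1).2
      (hasSum_coe_mul_geometric_of_norm_lt_one hnorm)
  refine ((hgeo.mul_left a).add (harith.mul_left b)).congr_fun fun k => ?_
  push_cast
  ring

/-- `ρ^{t*}({k}) = C(-t,k) p^t (-q)^k` with `p = 1 - q`, written via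
`C(-t,k) (-1)^k = t(t+1)⋯(t+k-1)/k!`. -/
noncomputable def negBinomWeight (q t : ℝ) (k : ℕ) : ℝ :=
  (1 - q) ^ t * q ^ k * (∏ j ∈ range k, (t + (j : ℝ))) / (k ! : ℝ)

section negBinomWeight

variable {q t : ℝ}

@[simp]
lemma negBinomWeight_zero : negBinomWeight q t 0 = (1 - q) ^ t := by
  simp [negBinomWeight]

lemma negBinomWeight_pos (hq : 0 < q) (hq1 : q < 1) (ht : 0 < t) (k : ℕ) :
    0 < negBinomWeight q t k := by
  have : 0 < 1 - q := by linarith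
  unfold negBinomWeight
  have := prod_pos fun (j : ℕ) (_ : j ∈ range k) => (by positivity : 0 < t + j)
  positivity

lemma negBinomWeight_succ_le (hq : 0 ≤ q) (hq1 : q ≤ 1) (ht : 0 ≤ t) (ht1 : t ≤ 1) (k : ℕ) :
    negBinomWeight q t (k + 1) ≤ t * q ^ (k + 1) := by
  have hp : (1 - q) ^ t ≤ 1 := rpow_le_one (by linarith) (by linarith) ht
  rw [negBinomWeight, div_le_iff₀ (by positivity)]
  calc (1 - q) ^ t * q ^ (k + 1) * ∏ j ∈ range (k + 1), (t + j)
      ≤ 1 * q ^ (k + 1) * (t * (k + 1)!) := by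
        gcongr
        exact prod_range_succ_add_le_mul_factorial ht ht1 k
    _ = t * q ^ (k + 1) * (k + 1)! := by ring

lemma negBinomWeight_le_one (hq : 0 ≤ q) (hq1 : q ≤ 1) (ht : 0 ≤ t) (ht1 : t ≤ 1) (k : ℕ) :
    negBinomWeight q t k ≤ 1 := by
  cases k with
  | zero => simpa using rpow_le_one (by linarith) (by linarith) ht
  | succ k =>
    exact (negBinomWeight_succ_le hq hq1 ht ht1 k).trans
      (mul_le_one₀ ht1 (by positivity) (pow_le_one₀ hq hq1))

lemma div_succ_le_negBinomWeight_succ (hq : 0 ≤ q) (hq1 : q ≤ 1) (ht : 0 ≤ t) (k : ℕ) :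
    t * (1 - q) ^ t * q ^ (k + 1) / (k + 1) ≤ negBinomWeight q t (k + 1) := by
  have hfac : 0 < (k ! : ℝ) := by positivity
  have hP : t ≤ (∏ j ∈ range (k + 1), (t + j)) / k ! := by
    rw [le_div_iff₀ hfac]
    exact mul_factorial_le_prod_range_succ_add ht k
  calc t * (1 - q) ^ t * q ^ (k + 1) / (k + 1)
      = (1 - q) ^ t * q ^ (k + 1) * t / (k + 1) := by ring
    _ ≤ (1 - q) ^ t * q ^ (k + 1) * ((∏ j ∈ range (k + 1), (t + j)) / k !) / (k + 1) := by
        gcongr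
    _ = negBinomWeight q t (k + 1) := by
        rw [negBinomWeight, Nat.factorial_succ]
        push_cast
        field_simp

lemma neg_log_negBinomWeight_succ_le (hq : 0 < q) (hq1 : q < 1) (ht : 0 < t) (k : ℕ) :
    -log (negBinomWeight q t (k + 1)) ≤
      -log t - t * log (1 - q) - (k + 1) * log q + log (k + 1) := by
  have hp : 0 < 1 - q := by linarith
  have hlog := log_le_log (by positivity) (div_succ_le_negBinomWeight_succ hq.le hq1.le ht.le k)
  rw [log_div (by positivity) (by positivity), log_mul (by positivity) (by positivity),
    log_mul (by positivity) (by positivity), log_rpow hp, log_pow] at hlog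
  push_cast at hlog
  linarith

lemma negMulLog_negBinomWeight_zero_le (hq : 0 ≤ q) (hq1 : q < 1) (ht : 0 ≤ t) :
    negMulLog (negBinomWeight q t 0) ≤ t * -log (1 - q) := by
  have hp : 0 < 1 - q := by linarith
  have hpt : (1 - q) ^ t ≤ 1 := rpow_le_one hp.le (by linarith) ht
  simpa using negMulLog_le_mul_of_le (rpow_nonneg hp.le t) hpt hpt
    (b := t * -log (1 - q)) (by rw [log_rpow hp]; linarith)

lemma negMulLog_negBinomWeight_succ_le (hq : 0 < q) (hq1 : q < 1) (ht : 0 < t) (ht1 : t ≤ 1)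
    (k : ℕ) :
    negMulLog (negBinomWeight q t (k + 1)) ≤
      t * (q ^ (k + 1) * ((-log t - (t + 1) * log (1 - q) - 1) + ((1 - q) - log q) * (k + 1))) := by
  have hlogk := log_le_mul_sub_one_sub_log (sub_pos.2 hq1) (k.cast_add_one_pos (α := ℝ))
  rw [← mul_assoc]
  refine negMulLog_le_mul_of_le (negBinomWeight_pos hq hq1 ht _).le
    (negBinomWeight_succ_le hq.le hq1.le ht.le ht1 k)
    (negBinomWeight_le_one hq.le hq1.le ht.le ht1 _) ?_
  linarith [neg_log_negBinomWeight_succ_le hq hq1 ht k]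

lemma negBinom_entropy_majorant_le (hq : 0 ≤ q) (hq1 : q < 1) (ht : 0 ≤ t) (ht1 : t ≤ 1) :
    t * -log (1 - q) + t * ((-log t - (t + 1) * log (1 - q) - 1) * (q / (1 - q)) +
        ((1 - q) - log q) * (q / (1 - q) ^ 2)) ≤
      t * ((1 - q)⁻¹ * (1 + 2 * -log (1 - q)) + q / (1 - q) * -log t) := by
  have hp : 0 < 1 - q := by linarith
  have hL : 0 ≤ -log (1 - q) := neg_nonneg.2 (log_nonpos hp.le (by linarith))
  have hqlogq : q * -log q ≤ 1 - q := by
    simpa [negMulLog, neg_mul_comm] using negMulLog_le_one_sub_self hq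
  have hslack : 0 ≤ t * ((1 - q - q * -log q) + -log (1 - q) * (1 - q) * (1 - t * q)) /
      (1 - q) ^ 2 := by
    have : 0 ≤ -log (1 - q) * (1 - q) * (1 - t * q) := by
      have : 0 ≤ 1 - t * q := by nlinarith
      positivity
    exact div_nonneg (mul_nonneg ht (by linarith)) (sq_nonneg _)
  have hdiff : t * ((1 - q)⁻¹ * (1 + 2 * -log (1 - q)) + q / (1 - q) * -log t) -
      (t * -log (1 - q) + t * ((-log t - (t + 1) * log (1 - q) - 1) * (q / (1 - q)) +
        ((1 - q) - log q) * (q / (1 - q) ^ 2))) =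
      t * ((1 - q - q * -log q) + -log (1 - q) * (1 - q) * (1 - t * q)) / (1 - q) ^ 2 := by
    field_simp
    ring
  linarith

end negBinomWeight

/-- The entropy of the negative binomial distribution `ρ^{t*}` with parameters
`t ∈ (0,1]` and `p = 1 - q` satisfies
`H(ρ^{t*}) ≤ t[(1/p)(1 + 2 log(1/p)) + (q/p) log(1/t)]`. -/
theorem negbinom_entropy_bound (q t : ℝ) (hq : 0 < q) (hq1 : q < 1)
    (ht : 0 < t) (ht1 : t ≤ 1) :
    -∑' k : ℕ,
        ((1 - q) ^ t * q ^ k * (∏ j ∈ Finset.range k, (t + (j : ℝ))) / (Nat.factorial k : ℝ)) *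
          Real.log
            ((1 - q) ^ t * q ^ k * (∏ j ∈ Finset.range k, (t + (j : ℝ))) /
              (Nat.factorial k : ℝ)) ≤
      t * (1 / (1 - q) * (1 + 2 * Real.log (1 / (1 - q))) +
        q / (1 - q) * Real.log (1 / t)) := by
  change -∑' k, negBinomWeight q t k * log (negBinomWeight q t k) ≤ _
  simp only [← tsum_neg, ← neg_mul, ← negMulLog.eq_def, one_div, log_inv]
  have hmajorant := (hasSum_pow_succ_mul_affine hq.le hq1
    (-log t - (t + 1) * log (1 - q) - 1) ((1 - q) - log q)).mul_left t
  have hterm := negMulLog_negBinomWeight_succ_le hq hq1 ht ht1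
  have htail : Summable fun k => negMulLog (negBinomWeight q t (k + 1)) :=
    hmajorant.summable.of_nonneg_of_le (fun k => negMulLog_nonneg
      (negBinomWeight_pos hq hq1 ht _).le (negBinomWeight_le_one hq.le hq1.le ht.le ht1 _)) hterm
  rw [((summable_nat_add_iff (f := fun k => negMulLog (negBinomWeight q t k)) 1).1
    htail).tsum_eq_zero_add]
  exact (add_le_add (negMulLog_negBinomWeight_zero_le hq.le hq1 ht.le)
    (hasSum_le hterm htail.hasSum hmajorant)).trans
    (negBinom_entropy_majorant_le hq.le hq1 ht.le ht1)
end

section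
/- Let c > 1 be such that c^k is rational for some k ∈ ℕ; let k₀ be the smallest such k, write c^{k₀} = α/β in lowest terms with α, β ∈ ℕ, and let f be the largest t ∈ ℕ₀ with 2^t | β. Then for every even m ∈ ℕ, the set G_m = {(n', m') ∈ ℕ₀ × ℕ : c^{−n'} m' = m, m' odd} contains at most one element; moreover if G_m ≠ ∅ for some even m, then f ≥ 1. -/
/-!
If `c ^ (-n) * m' = m`, then `c ^ n = m' / m` is rational, and since the exponents `k` with
`c ^ k ∈ ℚ` are closed under `gcd`, the minimal one `k₀` divides `n`, say `n = l * k₀`. Then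
`m' * β ^ l = m * α ^ l`; comparing `2`-adic valuations with `m'` odd and `m` even forces
`2 ∣ β`, hence `α` odd and `l * v₂(β) = v₂(m)`. So `l`, and with it `n` and `m' = m * c ^ n`,
is determined by `m`.
-/

lemma Nat.factorization_eq_of_pow_dvd_of_not_pow_succ_dvd {p k n : ℕ} (hp : p.Prime)
    (h : p ^ k ∣ n) (h' : ¬p ^ (k + 1) ∣ n) : n.factorization p = k := by
  have hn : n ≠ 0 := by
    rintro rfl
    exact h' (dvd_zero _)
  rw [hp.pow_dvd_iff_le_factorization hn] at h h'
  omega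

section RationalPowers

variable {K : Type*} [Field K] [CharZero K] {c : K}

lemma exists_rat_pow_gcd (hc : c ≠ 0) {n k : ℕ} (hn : ∃ s : ℚ, c ^ n = s)
    (hk : ∃ s : ℚ, c ^ k = s) : ∃ s : ℚ, c ^ n.gcd k = s := by
  obtain ⟨s, hs⟩ := hn
  obtain ⟨t, ht⟩ := hk
  refine ⟨s ^ n.gcdA k * t ^ n.gcdB k, ?_⟩
  have hbezout : c ^ (n.gcd k : ℤ) = (c ^ (n : ℤ)) ^ n.gcdA k * (c ^ (k : ℤ)) ^ n.gcdB k := by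
    rw [Nat.gcd_eq_gcd_ab, zpow_add₀ hc, zpow_mul, zpow_mul]
  simpa only [zpow_natCast, hs, ht, Rat.cast_mul, Rat.cast_zpow] using hbezout

lemma dvd_of_exists_rat_pow (hc : c ≠ 0) {k₀ n : ℕ} (hk₀ : 0 < k₀)
    (hmin : ∀ k : ℕ, 0 < k → (∃ s : ℚ, c ^ k = s) → k₀ ≤ k)
    (hk₀rat : ∃ s : ℚ, c ^ k₀ = s) (hn : ∃ s : ℚ, c ^ n = s) : k₀ ∣ n := by
  have hgcd : n.gcd k₀ = k₀ := le_antisymm (Nat.gcd_le_right _ hk₀)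
    (hmin _ (Nat.gcd_pos_of_pos_right _ hk₀) (exists_rat_pow_gcd hc hn hk₀rat))
  exact hgcd ▸ Nat.gcd_dvd_left n k₀

end RationalPowers

lemma factorization_eq_of_mul_pow_eq_mul_pow {p α β m m' l : ℕ} (hp : p.Prime)
    (hα : α ≠ 0) (hβ : β ≠ 0) (hcop : α.Coprime β) (hm : m ≠ 0) (hpm : p ∣ m)
    (hpm' : ¬p ∣ m') (heq : m' * β ^ l = m * α ^ l) :
    1 ≤ β.factorization p ∧ l * β.factorization p = m.factorization p := by
  have hm' : m' ≠ 0 := by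
    rintro rfl
    exact hpm' (dvd_zero p)
  have hval : l * β.factorization p = m.factorization p + l * α.factorization p := by
    have := congrArg (·.factorization p) heq
    simpa [Nat.factorization_mul, hm', hβ, hm, hα, Nat.factorization_eq_zero_of_not_dvd hpm']
      using this
  have hvm : 1 ≤ m.factorization p := (hp.dvd_iff_one_le_factorization hm).mp hpm
  have hvβ : 1 ≤ β.factorization p := by
    by_contra! h
    rw [Nat.lt_one_iff.mp h] at hval
    omega
  have hpα : ¬p ∣ α := fun hpα =>
    hp.one_lt.ne' (Nat.eq_one_of_dvd_coprimes hcop hpα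
      ((hp.dvd_iff_one_le_factorization hβ).mpr hvβ))
  rw [Nat.factorization_eq_zero_of_not_dvd hpα] at hval
  exact ⟨hvβ, by omega⟩

lemma eq_of_zpow_neg_mul_eq_of_odd {c : ℝ} (hc : c ≠ 0) {k₀ : ℕ} (hk₀ : 0 < k₀)
    (hmin : ∀ k : ℕ, 0 < k → (∃ s : ℚ, c ^ k = (s : ℝ)) → k₀ ≤ k)
    {α β : ℕ} (hα : 0 < α) (hβ : 0 < β) (hcop : Nat.Coprime α β)
    (hc0 : c ^ k₀ = (α : ℝ) / (β : ℝ)) {m n m' : ℕ} (hm : Even m) (hm0 : 0 < m)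
    (h : c ^ (-(n : ℤ)) * (m' : ℝ) = (m : ℝ)) (hm' : Odd m') :
    1 ≤ β.factorization 2 ∧ n = k₀ * (m.factorization 2 / β.factorization 2) := by
  have hmR : (m : ℝ) ≠ 0 := by positivity
  have hpow : c ^ n = (m' : ℝ) / m := by
    rw [zpow_neg, zpow_natCast, inv_mul_eq_iff_eq_mul₀ (pow_ne_zero n hc)] at h
    rw [h, mul_div_cancel_right₀ _ hmR]
  obtain ⟨l, rfl⟩ := dvd_of_exists_rat_pow hc hk₀ hmin ⟨α / β, by push_cast; exact hc0⟩
    ⟨m' / m, by push_cast; exact hpow⟩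
  have heq : m' * β ^ l = m * α ^ l := by
    rw [pow_mul, hc0, div_pow, div_eq_div_iff (by positivity) hmR] at hpow
    exact_mod_cast hpow.symm.trans (mul_comm _ _)
  obtain ⟨hβ2, hl⟩ := factorization_eq_of_mul_pow_eq_mul_pow Nat.prime_two hα.ne' hβ.ne' hcop
    hm0.ne' hm.two_dvd hm'.not_two_dvd_nat heq
  exact ⟨hβ2, by rw [← hl, Nat.mul_div_cancel _ hβ2]⟩

theorem G_m_subsingleton_general (c : ℝ) (hc : 1 < c) (k₀ : ℕ) (hk₀ : 0 < k₀)
    (hmin : ∀ k : ℕ, 0 < k → (∃ s : ℚ, c ^ k = (s : ℝ)) → k₀ ≤ k)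
    (α β : ℕ) (hα : 0 < α) (hβ : 0 < β) (hcop : Nat.Coprime α β)
    (hc0 : c ^ k₀ = (α : ℝ) / (β : ℝ))
    (f : ℕ) (hf : 2 ^ f ∣ β) (hf2 : ¬ 2 ^ (f + 1) ∣ β) :
    (∀ m : ℕ, Even m → 0 < m →
      Set.Subsingleton {x : ℕ × ℕ | c ^ (-(x.1 : ℤ)) * (x.2 : ℝ) = (m : ℝ) ∧ Odd x.2}) ∧
    ((∃ m : ℕ, Even m ∧ 0 < m ∧
      Set.Nonempty {x : ℕ × ℕ | c ^ (-(x.1 : ℤ)) * (x.2 : ℝ) = (m : ℝ) ∧ Odd x.2}) →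
      1 ≤ f) := by
  have hβf : β.factorization 2 = f :=
    Nat.factorization_eq_of_pow_dvd_of_not_pow_succ_dvd Nat.prime_two hf hf2
  subst hβf
  have hc₀ : c ≠ 0 := (zero_lt_one.trans hc).ne'
  have key := @eq_of_zpow_neg_mul_eq_of_odd c hc₀ k₀ hk₀ hmin α β hα hβ hcop hc0
  constructor
  · rintro m hm hm0 ⟨n₁, m₁⟩ ⟨h₁, hodd₁⟩ ⟨n₂, m₂⟩ ⟨h₂, hodd₂⟩
    have hn : n₁ = n₂ := (key hm hm0 h₁ hodd₁).2.trans (key hm hm0 h₂ hodd₂).2.symm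
    subst hn
    exact Prod.ext rfl
      (Nat.cast_injective (mul_left_cancel₀ (zpow_ne_zero _ hc₀) (h₁.trans h₂.symm)))
  · rintro ⟨m, hm, hm0, ⟨n, m'⟩, h, hodd⟩
    exact (key hm hm0 h hodd).1

/-- Let `c > 1` with `c^{k₀}` rational for a minimal `k₀ ≥ 1`, write
`c^{k₀} = α/β` in lowest terms and let `f` be the exact power of `2` dividing `β`.
Then for every even `m ≥ 1` the set
`G_m = {(n', m') : c^{-n'} m' = m, m' odd}` has at most one element, and if some
`G_m` (with `m` even) is nonempty, then `f ≥ 1`. -/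
theorem G_m_subsingleton (c : ℝ) (hc : 1 < c) (k₀ : ℕ) (hk₀ : 0 < k₀)
    (hrat : ∃ s : ℚ, c ^ k₀ = (s : ℝ))
    (hmin : ∀ k : ℕ, 0 < k → (∃ s : ℚ, c ^ k = (s : ℝ)) → k₀ ≤ k)
    (α β : ℕ) (hα : 0 < α) (hβ : 0 < β) (hcop : Nat.Coprime α β)
    (hc0 : c ^ k₀ = (α : ℝ) / (β : ℝ))
    (f : ℕ) (hf : 2 ^ f ∣ β) (hf2 : ¬ 2 ^ (f + 1) ∣ β) :
    (∀ m : ℕ, Even m → 0 < m →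
      Set.Subsingleton {x : ℕ × ℕ | c ^ (-(x.1 : ℤ)) * (x.2 : ℝ) = (m : ℝ) ∧ Odd x.2}) ∧
    ((∃ m : ℕ, Even m ∧ 0 < m ∧
      Set.Nonempty {x : ℕ × ℕ | c ^ (-(x.1 : ℤ)) * (x.2 : ℝ) = (m : ℝ) ∧ Odd x.2}) →
      1 ≤ f) :=
  G_m_subsingleton_general c hc k₀ hk₀ hmin α β hα hβ hcop hc0 f hf hf2
end
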